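/- arXiv:1704.08425 — 5 statements merged into one kernel-verified Lean document; each statement's English description precedes it below -/
import Mathlib

section
/- Low-frequency L∞ bound via LMI (sufficiency direction of Theorem 2): Let 0 < ν < 2, φ = (π/2)(ν−1), δ > 0, ω_L > 0, and let A ∈ ℝ^{n×n}, B ∈ ℝ^{n×m}, C ∈ ℝ^{p×n}, D ∈ ℝ^{p×m}. Suppose there exist Hermitian matrices U, V ∈ ℂ^{n×n} with V positive definite such that, with X = e^{iφ}AᵀU and Y = −BᵀVA + e^{iφ}BᵀU, the Hermitian block matrix [[Sym(X) − AᵀVA + ω_L^{2ν}V, Y*, Cᵀ],[Y, −δI_m − BᵀVB, Dᵀ],[C, D, −δI_p]] is negative definite. Then for every ω ∈ [0, ω_L], the matrix ω^ν e^{iπν/2} I_n − A is invertible and σmax(C(ω^ν e^{iπν/2} I_n − A)^{−1}B + D) < δ. -/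
open Matrix Complex
open scoped Matrix Kronecker ComplexOrder

/-- The largest singular value (ℓ² operator norm) of a complex matrix. -/
noncomputable def sigmaMax {m n : ℕ} (M : Matrix (Fin m) (Fin n) ℂ) : ℝ :=
  ‖LinearMap.toContinuousLinearMap (Matrix.toEuclideanLin M)‖

/-- A real matrix regarded as a complex matrix. -/
noncomputable def cmap {a b : ℕ} (M : Matrix (Fin a) (Fin b) ℝ) : Matrix (Fin a) (Fin b) ℂ :=
  M.map Complex.ofReal

/-- ρ(θ, M) = [θ,1]* M [θ,1], real-valued for Hermitian M. -/
noncomputable def rho (θ : ℂ) (M : Matrix (Fin 2) (Fin 2) ℂ) : ℝ :=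
  (star ![θ, 1] ⬝ᵥ M *ᵥ ![θ, 1]).re

/-- Δ₀ = [[0, e^{iφ}],[e^{−iφ}, 0]]. -/
noncomputable def Delta0 (φ : ℝ) : Matrix (Fin 2) (Fin 2) ℂ :=
  !![0, Complex.exp ((φ : ℂ) * Complex.I);
     Complex.exp (-(φ : ℂ) * Complex.I), 0]

/-- Σ₀ = [[α, β e^{iφ}],[β e^{−iφ}, γ]]. -/
noncomputable def Sigma0 (φ α β γ : ℝ) : Matrix (Fin 2) (Fin 2) ℂ :=
  !![(α : ℂ), (β : ℂ) * Complex.exp ((φ : ℂ) * Complex.I);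
     (β : ℂ) * Complex.exp (-(φ : ℂ) * Complex.I), (γ : ℂ)]

/-- A 3×3 block matrix. -/
noncomputable def block3 {n m p : ℕ}
    (A11 : Matrix (Fin n) (Fin n) ℂ) (A12 : Matrix (Fin n) (Fin m) ℂ)
    (A13 : Matrix (Fin n) (Fin p) ℂ)
    (A21 : Matrix (Fin m) (Fin n) ℂ) (A22 : Matrix (Fin m) (Fin m) ℂ)
    (A23 : Matrix (Fin m) (Fin p) ℂ)
    (A31 : Matrix (Fin p) (Fin n) ℂ) (A32 : Matrix (Fin p) (Fin m) ℂ)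
    (A33 : Matrix (Fin p) (Fin p) ℂ) :
    Matrix ((Fin n ⊕ Fin m) ⊕ Fin p) ((Fin n ⊕ Fin m) ⊕ Fin p) ℂ :=
  Matrix.fromBlocks (Matrix.fromBlocks A11 A12 A21 A22)
    (Matrix.fromRows A13 A23) (Matrix.fromCols A31 A32) A33


/-!
Fix `ω ∈ [0, ω_L]`, put `s = ω^ν e^{iπν/2}` and evaluate the quadratic form of the LMI matrix
at `(x, u, w)` with `A x + B u = s x`. The `U`-terms add up to `2 Re(e^{iφ} s̄ · x*Ux)`, which
vanishes because `x*Ux` is real and `e^{iφ} s̄ = -i ω^ν` by the choice of `φ`; the `V`-terms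
complete to the square `-(Ax+Bu)*V(Ax+Bu) = -|s|² x*Vx`, leaving `(ω_L^{2ν} - ω^{2ν}) x*Vx ≥ 0`.
Negative definiteness therefore gives the dissipation inequality
`2 Re(w*(Cx + Du)) < δ|u|² + δ|w|²`. With `u = w = 0` it rules out a kernel vector of
`sI - A`; with `x = (sI - A)⁻¹Bu` and `w = (Cx + Du)/δ` it gives `|G(iω)u| < δ|u|`, and the
supremum defining `σmax` is attained on the compact unit sphere.
-/

open ComplexConjugate

lemma cmap_transpose {k l : ℕ} (M : Matrix (Fin k) (Fin l) ℝ) : (cmap M)ᵀ = (cmap M)ᴴ := by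
  ext i j
  simp [cmap, Matrix.conjTranspose_apply]

lemma star_dotProduct_conjTranspose_mulVec {ι κ : Type*} [Fintype ι] [Fintype κ]
    (M : Matrix κ ι ℂ) (a : ι → ℂ) (b : κ → ℂ) :
    star a ⬝ᵥ (Mᴴ *ᵥ b) = star (M *ᵥ a) ⬝ᵥ b := by
  rw [dotProduct_mulVec, ← star_mulVec]

lemma re_star_dotProduct_self_eq_norm_sq {ι : Type*} [Fintype ι] (v : ι → ℂ) :
    (star v ⬝ᵥ v).re = ‖WithLp.toLp 2 v‖ ^ 2 := by
  rw [← inner_self_eq_norm_sq (𝕜 := ℂ), EuclideanSpace.inner_toLp_toLp, dotProduct_comm]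
  rfl

lemma ContinuousLinearMap.opNorm_lt_of_norm_apply_lt {𝕜 E F : Type*} [RCLike 𝕜]
    [NormedAddCommGroup E] [NormedSpace 𝕜 E] [FiniteDimensional 𝕜 E]
    [NormedAddCommGroup F] [NormedSpace 𝕜 F] (f : E →L[𝕜] F) {C : ℝ} (hC : 0 < C)
    (h : ∀ x ≠ 0, ‖f x‖ < C * ‖x‖) : ‖f‖ < C := by
  rcases subsingleton_or_nontrivial E with hE | hE
  · rwa [Subsingleton.elim f 0, opNorm_zero]
  have : ProperSpace E := FiniteDimensional.proper 𝕜 E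
  obtain ⟨x₀, hx₀, hmax⟩ := (isCompact_sphere (0 : E) 1).exists_isMaxOn
    (Set.nonempty_coe_sort.mp (NormedSpace.sphere_nonempty_rclike 𝕜 zero_le_one))
    f.continuous.norm.continuousOn
  have hx₀ : ‖x₀‖ = 1 := mem_sphere_zero_iff_norm.mp hx₀
  calc ‖f‖ ≤ ‖f x₀‖ :=
        f.opNorm_le_of_unit_norm (norm_nonneg _) fun x hx => hmax (mem_sphere_zero_iff_norm.mpr hx)
    _ < C := by simpa [hx₀] using h x₀ (norm_ne_zero_iff.mp (by simp [hx₀]))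

lemma sigmaMax_lt_of_re_dotProduct_lt {k l : ℕ} (M : Matrix (Fin k) (Fin l) ℂ) {δ : ℝ}
    (hδ : 0 < δ) (h : ∀ v ≠ 0, (star (M *ᵥ v) ⬝ᵥ (M *ᵥ v)).re < δ ^ 2 * (star v ⬝ᵥ v).re) :
    sigmaMax M < δ := by
  refine ContinuousLinearMap.opNorm_lt_of_norm_apply_lt _ hδ fun v hv => ?_
  have hv' : v.ofLp ≠ 0 := fun h0 => hv (by simpa using congrArg (WithLp.toLp 2) h0)
  rw [← pow_lt_pow_iff_left₀ (norm_nonneg _) (by positivity) two_ne_zero, mul_pow]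
  have hlt := h v.ofLp hv'
  rwa [re_star_dotProduct_self_eq_norm_sq, re_star_dotProduct_self_eq_norm_sq] at hlt

lemma star_dotProduct_block3_mulVec {n m p : ℕ}
    (M11 : Matrix (Fin n) (Fin n) ℂ) (M12 : Matrix (Fin n) (Fin m) ℂ)
    (M13 : Matrix (Fin n) (Fin p) ℂ)
    (M21 : Matrix (Fin m) (Fin n) ℂ) (M22 : Matrix (Fin m) (Fin m) ℂ)
    (M23 : Matrix (Fin m) (Fin p) ℂ)
    (M31 : Matrix (Fin p) (Fin n) ℂ) (M32 : Matrix (Fin p) (Fin m) ℂ)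
    (M33 : Matrix (Fin p) (Fin p) ℂ)
    (x : Fin n → ℂ) (u : Fin m → ℂ) (w : Fin p → ℂ) :
    star (Sum.elim (Sum.elim x u) w) ⬝ᵥ
      (block3 M11 M12 M13 M21 M22 M23 M31 M32 M33 *ᵥ Sum.elim (Sum.elim x u) w) =
      star x ⬝ᵥ (M11 *ᵥ x) + star x ⬝ᵥ (M12 *ᵥ u) + star x ⬝ᵥ (M13 *ᵥ w)
      + (star u ⬝ᵥ (M21 *ᵥ x) + star u ⬝ᵥ (M22 *ᵥ u) + star u ⬝ᵥ (M23 *ᵥ w))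
      + (star w ⬝ᵥ (M31 *ᵥ x) + star w ⬝ᵥ (M32 *ᵥ u) + star w ⬝ᵥ (M33 *ᵥ w)) := by
  simp only [block3, Function.star_sumElim, fromBlocks_mulVec, Sum.elim_comp_inl,
    Sum.elim_comp_inr, fromRows_mulVec, fromCols_mulVec, sumElim_dotProduct_sumElim, dotProduct_add]
  ring

lemma re_exp_mul_I_mul_star_eq_zero {φ θ r : ℝ} (h : φ - θ = -(Real.pi / 2)) :
    (exp (φ * I) * star ((r : ℂ) * exp (θ * I))).re = 0 := by
  have hprod : exp (φ * I) * star ((r : ℂ) * exp (θ * I)) = r * exp ((φ - θ : ℝ) * I) := by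
    rw [star_mul', star_def, ← exp_conj, map_mul, conj_ofReal, conj_ofReal, conj_I,
      mul_left_comm, ← exp_add]
    congr 2
    push_cast
    ring
  rw [hprod, re_ofReal_mul, exp_ofReal_mul_I_re, h, Real.cos_neg, Real.cos_pi_div_two, mul_zero]

lemma sq_norm_rpow_mul_exp_mul_I_le {ω ω' ν θ : ℝ} (hν : 0 ≤ ν) (hω : 0 ≤ ω) (hωω' : ω ≤ ω') :
    ‖((ω ^ ν : ℝ) : ℂ) * exp (θ * I)‖ ^ 2 ≤ ω' ^ (2 * ν) :=
  calc ‖((ω ^ ν : ℝ) : ℂ) * exp (θ * I)‖ ^ 2 = (ω ^ ν) ^ 2 := by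
        rw [norm_mul, norm_exp_ofReal_mul_I, mul_one, norm_real,
          Real.norm_of_nonneg (Real.rpow_nonneg hω ν)]
    _ = ω ^ (2 * ν) := by rw [mul_comm, Real.rpow_mul hω, Real.rpow_two]
    _ ≤ ω' ^ (2 * ν) := Real.rpow_le_rpow hω hωω' (by positivity)

/-- The matrix of the LMI with `X` and `Y` substituted, for complex system matrices
(`ᵀ` becomes `ᴴ`). -/
noncomputable def lmiBlock {n m p : ℕ} (A : Matrix (Fin n) (Fin n) ℂ)
    (B : Matrix (Fin n) (Fin m) ℂ) (C : Matrix (Fin p) (Fin n) ℂ) (D : Matrix (Fin p) (Fin m) ℂ)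
    (U V : Matrix (Fin n) (Fin n) ℂ) (e : ℂ) (κ δ : ℝ) :
    Matrix ((Fin n ⊕ Fin m) ⊕ Fin p) ((Fin n ⊕ Fin m) ⊕ Fin p) ℂ :=
  block3
    (e • (Aᴴ * U) + (e • (Aᴴ * U))ᴴ - Aᴴ * V * A + (κ : ℂ) • V) (-(Bᴴ * V * A) + e • (Bᴴ * U))ᴴ
      Cᴴ
    (-(Bᴴ * V * A) + e • (Bᴴ * U)) (-(δ : ℂ) • 1 - Bᴴ * V * B) Dᴴ
    C D (-(δ : ℂ) • 1)

section lmiBlock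

variable {n m p : ℕ} {A : Matrix (Fin n) (Fin n) ℂ} {B : Matrix (Fin n) (Fin m) ℂ}
  {C : Matrix (Fin p) (Fin n) ℂ} {D : Matrix (Fin p) (Fin m) ℂ} {U V : Matrix (Fin n) (Fin n) ℂ}
  {e s : ℂ} {κ δ : ℝ}

lemma star_dotProduct_lmiBlock_mulVec (hV : V.IsHermitian) (x : Fin n → ℂ) (u : Fin m → ℂ)
    (w : Fin p → ℂ) :
    star (Sum.elim (Sum.elim x u) w) ⬝ᵥ
        (lmiBlock A B C D U V e κ δ *ᵥ Sum.elim (Sum.elim x u) w) =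
      e * (star (A *ᵥ x + B *ᵥ u) ⬝ᵥ (U *ᵥ x)) + star (e * (star (A *ᵥ x + B *ᵥ u) ⬝ᵥ (U *ᵥ x)))
      - star (A *ᵥ x + B *ᵥ u) ⬝ᵥ (V *ᵥ (A *ᵥ x + B *ᵥ u))
      + κ * (star x ⬝ᵥ (V *ᵥ x)) - δ * (star u ⬝ᵥ u) - δ * (star w ⬝ᵥ w)
      + (star w ⬝ᵥ (C *ᵥ x + D *ᵥ u) + star (star w ⬝ᵥ (C *ᵥ x + D *ᵥ u))) := by
  simp only [lmiBlock, star_dotProduct_block3_mulVec, conjTranspose_add, conjTranspose_neg,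
    conjTranspose_smul, conjTranspose_mul, conjTranspose_conjTranspose, hV.eq, add_mulVec,
    sub_mulVec, neg_mulVec, smul_mulVec, one_mulVec, ← mulVec_mulVec, dotProduct_add,
    dotProduct_sub, dotProduct_neg, dotProduct_smul, add_dotProduct, smul_eq_mul,
    star_dotProduct_conjTranspose_mulVec, star_add, star_mul']
  simp only [← star_dotProduct, mulVec_add, dotProduct_add]
  ring

lemma re_star_dotProduct_lmiBlock_mulVec_of_eq_smul (hU : U.IsHermitian) (hV : V.IsHermitian)
    (he : (e * star s).re = 0) {x : Fin n → ℂ} {u : Fin m → ℂ} {w : Fin p → ℂ}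
    (hxu : A *ᵥ x + B *ᵥ u = s • x) :
    (star (Sum.elim (Sum.elim x u) w) ⬝ᵥ
        (lmiBlock A B C D U V e κ δ *ᵥ Sum.elim (Sum.elim x u) w)).re =
      (κ - ‖s‖ ^ 2) * (star x ⬝ᵥ (V *ᵥ x)).re - δ * (star u ⬝ᵥ u).re - δ * (star w ⬝ᵥ w).re
        + 2 * (star w ⬝ᵥ (C *ᵥ x + D *ᵥ u)).re := by
  have hUx : (star x ⬝ᵥ (U *ᵥ x)).im = 0 := hU.im_star_dotProduct_mulVec_self x
  have hphase : (e * conj s * (star x ⬝ᵥ (U *ᵥ x))).re = 0 := by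
    rw [mul_re, ← star_def, he, hUx]
    ring
  have hgain : (s * conj s * (star x ⬝ᵥ (V *ᵥ x))).re = ‖s‖ ^ 2 * (star x ⬝ᵥ (V *ᵥ x)).re := by
    rw [mul_conj', ← ofReal_pow, re_ofReal_mul]
  rw [star_dotProduct_lmiBlock_mulVec hV, hxu]
  simp only [star_smul, smul_dotProduct, mulVec_smul, dotProduct_smul, smul_eq_mul, ← mul_assoc,
    add_re, sub_re, star_def, conj_re, re_ofReal_mul, hphase, hgain]
  ring

lemma lmiBlock_dissipation (hLMI : (-lmiBlock A B C D U V e κ δ).PosDef) (hU : U.IsHermitian)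
    (hV : V.IsHermitian) (he : (e * star s).re = 0) {x : Fin n → ℂ} {u : Fin m → ℂ}
    {w : Fin p → ℂ} (hxu : A *ᵥ x + B *ᵥ u = s • x) (hxuw : Sum.elim (Sum.elim x u) w ≠ 0) :
    (κ - ‖s‖ ^ 2) * (star x ⬝ᵥ (V *ᵥ x)).re + 2 * (star w ⬝ᵥ (C *ᵥ x + D *ᵥ u)).re
      < δ * (star u ⬝ᵥ u).re + δ * (star w ⬝ᵥ w).re := by
  have hpos := hLMI.re_dotProduct_pos hxuw
  rw [neg_mulVec, dotProduct_neg, map_neg, RCLike.re_to_complex,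
    re_star_dotProduct_lmiBlock_mulVec_of_eq_smul hU hV he hxu] at hpos
  linarith

lemma isUnit_smul_one_sub_of_lmiBlock (hLMI : (-lmiBlock A B C D U V e κ δ).PosDef)
    (hU : U.IsHermitian) (hV : V.PosDef) (he : (e * star s).re = 0) (hκ : ‖s‖ ^ 2 ≤ κ) :
    IsUnit (s • (1 : Matrix (Fin n) (Fin n) ℂ) - A) := by
  rw [isUnit_iff_isUnit_det, isUnit_iff_ne_zero]
  intro hdet
  obtain ⟨x, hx, hAx⟩ := exists_mulVec_eq_zero_iff.mpr hdet
  have hxu : A *ᵥ x + B *ᵥ 0 = s • x := by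
    rw [sub_mulVec, smul_mulVec, one_mulVec, sub_eq_zero] at hAx
    rw [mulVec_zero, add_zero, hAx]
  have hx0 : Sum.elim (Sum.elim x (0 : Fin m → ℂ)) (0 : Fin p → ℂ) ≠ 0 :=
    fun h => hx (funext fun i => congrFun h (.inl (.inl i)))
  have hdiss := lmiBlock_dissipation hLMI hU hV.isHermitian he hxu hx0
  simp only [star_zero, zero_dotProduct, zero_re, mul_zero, add_zero] at hdiss
  exact hdiss.not_ge (mul_nonneg (sub_nonneg.mpr hκ) (hV.re_dotProduct_pos hx).le)

lemma sigmaMax_transfer_lt_of_lmiBlock (hLMI : (-lmiBlock A B C D U V e κ δ).PosDef)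
    (hU : U.IsHermitian) (hV : V.PosDef) (he : (e * star s).re = 0) (hκ : ‖s‖ ^ 2 ≤ κ)
    (hδ : 0 < δ) : sigmaMax (C * (s • (1 : Matrix (Fin n) (Fin n) ℂ) - A)⁻¹ * B + D) < δ := by
  have hdet := (isUnit_iff_isUnit_det _).mp (isUnit_smul_one_sub_of_lmiBlock hLMI hU hV he hκ)
  refine sigmaMax_lt_of_re_dotProduct_lt _ hδ fun v hv => ?_
  set x := (s • (1 : Matrix (Fin n) (Fin n) ℂ) - A)⁻¹ *ᵥ (B *ᵥ v)
  have hxu : A *ᵥ x + B *ᵥ v = s • x := by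
    have hx : (s • (1 : Matrix (Fin n) (Fin n) ℂ) - A) *ᵥ x = B *ᵥ v := by
      rw [mulVec_mulVec, mul_nonsing_inv _ hdet, one_mulVec]
    rw [← hx, sub_mulVec, smul_mulVec, one_mulVec]
    abel
  have hGv : (C * (s • (1 : Matrix (Fin n) (Fin n) ℂ) - A)⁻¹ * B + D) *ᵥ v = C *ᵥ x + D *ᵥ v := by
    rw [add_mulVec, ← mulVec_mulVec, ← mulVec_mulVec]
  rw [hGv]
  -- with `w = y / δ` the dissipation inequality reads `|y|² / δ < δ |v|² - (κ - ‖s‖²) x*Vx`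
  have hxvw : Sum.elim (Sum.elim x v) (δ⁻¹ • (C *ᵥ x + D *ᵥ v)) ≠ 0 :=
    fun h => hv (funext fun i => congrFun h (.inl (.inr i)))
  have hdiss := lmiBlock_dissipation hLMI hU hV.isHermitian he hxu hxvw
  simp only [star_smul, star_trivial, smul_dotProduct, dotProduct_smul, smul_re, smul_eq_mul]
    at hdiss
  have hVx : 0 ≤ (star x ⬝ᵥ (V *ᵥ x)).re := hV.posSemidef.re_dotProduct_nonneg x
  set Y := (star (C *ᵥ x + D *ᵥ v) ⬝ᵥ (C *ᵥ x + D *ᵥ v)).re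
  have hY : δ⁻¹ * Y < δ * (star v ⬝ᵥ v).re := by
    have h : δ * (δ⁻¹ * (δ⁻¹ * Y)) = δ⁻¹ * Y := by field_simp
    nlinarith [mul_nonneg (sub_nonneg.mpr hκ) hVx]
  calc Y = δ * (δ⁻¹ * Y) := by field_simp
    _ < δ * (δ * (star v ⬝ᵥ v).re) := mul_lt_mul_of_pos_left hY hδ
    _ = δ ^ 2 * (star v ⬝ᵥ v).re := by ring

end lmiBlock

theorem fos_Linf_low_frequency_general {n m p : ℕ} (ν φ δ ωL : ℝ)
    (hν : 0 < ν) (hφ : φ = (Real.pi / 2) * (ν - 1))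
    (hδ : 0 < δ)
    (A : Matrix (Fin n) (Fin n) ℝ) (B : Matrix (Fin n) (Fin m) ℝ)
    (C : Matrix (Fin p) (Fin n) ℝ) (D : Matrix (Fin p) (Fin m) ℝ)
    (U V : Matrix (Fin n) (Fin n) ℂ)
    (hU : U.IsHermitian) (hVpd : V.PosDef)
    (X : Matrix (Fin n) (Fin n) ℂ) (Y : Matrix (Fin m) (Fin n) ℂ)
    (hX : X = Complex.exp ((φ : ℂ) * Complex.I) • ((cmap A)ᵀ * U))
    (hY : Y = -((cmap B)ᵀ * V * cmap A) +
      Complex.exp ((φ : ℂ) * Complex.I) • ((cmap B)ᵀ * U))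
    (hLMI : (-(block3
      (X + Xᴴ - (cmap A)ᵀ * V * cmap A + ((ωL ^ (2 * ν) : ℝ) : ℂ) • V) Yᴴ (cmap C)ᵀ
      Y (-(δ : ℂ) • 1 - (cmap B)ᵀ * V * cmap B) (cmap D)ᵀ
      (cmap C) (cmap D) (-(δ : ℂ) • 1))).PosDef) :
    ∀ ω : ℝ, 0 ≤ ω → ω ≤ ωL →
      IsUnit ((((ω ^ ν : ℝ) : ℂ) * Complex.exp ((Real.pi * ν / 2 : ℝ) * Complex.I)) •
          (1 : Matrix (Fin n) (Fin n) ℂ) - cmap A) ∧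
      sigmaMax (cmap C *
        ((((ω ^ ν : ℝ) : ℂ) * Complex.exp ((Real.pi * ν / 2 : ℝ) * Complex.I)) •
          (1 : Matrix (Fin n) (Fin n) ℂ) - cmap A)⁻¹ * cmap B + cmap D) < δ := by
  intro ω hω hωωL
  have hLMI' : (-lmiBlock (cmap A) (cmap B) (cmap C) (cmap D) U V (exp (φ * I))
      (ωL ^ (2 * ν)) δ).PosDef := by
    subst hX hY
    simpa only [lmiBlock, cmap_transpose] using hLMI
  have he : (exp (φ * I) * star (((ω ^ ν : ℝ) : ℂ) * exp ((Real.pi * ν / 2 : ℝ) * I))).re = 0 :=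
    re_exp_mul_I_mul_star_eq_zero (by rw [hφ]; ring)
  have hκ := sq_norm_rpow_mul_exp_mul_I_le (θ := Real.pi * ν / 2) hν.le hω hωωL
  exact ⟨isUnit_smul_one_sub_of_lmiBlock hLMI' hU hVpd he hκ,
    sigmaMax_transfer_lt_of_lmiBlock hLMI' hU hVpd he hκ hδ⟩

/-- Low-frequency L∞ bound via LMI (sufficiency direction of Theorem 2). -/
theorem fos_Linf_low_frequency {n m p : ℕ} (ν φ δ ωL : ℝ)
    (hν : 0 < ν) (hν2 : ν < 2) (hφ : φ = (Real.pi / 2) * (ν - 1))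
    (hδ : 0 < δ) (hωL : 0 < ωL)
    (A : Matrix (Fin n) (Fin n) ℝ) (B : Matrix (Fin n) (Fin m) ℝ)
    (C : Matrix (Fin p) (Fin n) ℝ) (D : Matrix (Fin p) (Fin m) ℝ)
    (U V : Matrix (Fin n) (Fin n) ℂ)
    (hU : U.IsHermitian) (hV : V.IsHermitian) (hVpd : V.PosDef)
    (X : Matrix (Fin n) (Fin n) ℂ) (Y : Matrix (Fin m) (Fin n) ℂ)
    (hX : X = Complex.exp ((φ : ℂ) * Complex.I) • ((cmap A)ᵀ * U))
    (hY : Y = -((cmap B)ᵀ * V * cmap A) +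
      Complex.exp ((φ : ℂ) * Complex.I) • ((cmap B)ᵀ * U))
    (hLMI : (-(block3
      (X + Xᴴ - (cmap A)ᵀ * V * cmap A + ((ωL ^ (2 * ν) : ℝ) : ℂ) • V) Yᴴ (cmap C)ᵀ
      Y (-(δ : ℂ) • 1 - (cmap B)ᵀ * V * cmap B) (cmap D)ᵀ
      (cmap C) (cmap D) (-(δ : ℂ) • 1))).PosDef) :
    ∀ ω : ℝ, 0 ≤ ω → ω ≤ ωL →
      IsUnit ((((ω ^ ν : ℝ) : ℂ) * Complex.exp ((Real.pi * ν / 2 : ℝ) * Complex.I)) •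
          (1 : Matrix (Fin n) (Fin n) ℂ) - cmap A) ∧
      sigmaMax (cmap C *
        ((((ω ^ ν : ℝ) : ℂ) * Complex.exp ((Real.pi * ν / 2 : ℝ) * Complex.I)) •
          (1 : Matrix (Fin n) (Fin n) ℂ) - cmap A)⁻¹ * cmap B + cmap D) < δ :=
  fos_Linf_low_frequency_general ν φ δ ωL hν hφ hδ A B C D U V hU hVpd X Y hX hY hLMI
end

section
/- Joint congruence normal form (Lemma 5): Let 0 < ν < 2 and φ = (π/2)(ν−1). Let Δ, Σ ∈ ℂ^{2×2} be Hermitian and suppose det Δ < 0 (the determinant of a Hermitian matrix is real). Then there exist an invertible matrix T ∈ ℂ^{2×2} and real numbers α, β, γ with α ≤ γ such that Δ = T*Δ₀T and Σ = T*Σ₀T, where Δ₀ = [[0, e^{iφ}],[e^{−iφ}, 0]] and Σ₀ = [[α, β e^{iφ}],[β e^{−iφ}, γ]]. -/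
open Matrix Complex
open scoped Matrix Kronecker ComplexOrder

/-! Diagonalising `Δ` by a unitary matrix and rescaling its two eigenvalues, which have opposite
signs because `det Δ < 0`, gives `Δ = Rᴴ K R` with `K = diag(1, -1)`. The congruences by
`diag(1, u)`, `‖u‖ = 1`, fix `K` and rotate the off-diagonal entry of the Hermitian matrix
`R⁻ᴴ Σ R⁻¹` onto the half-line `t ≤ 0`. The Hadamard matrix carries `[[0, 1], [1, 0]]` to `K` and
`[[α, β], [β, γ]]` to a real symmetric matrix with off-diagonal entry `(α - γ) / 2`, so `t ≤ 0`
becomes `α ≤ γ`; finally `diag(1, e^{-iφ})` carries `Δ₀` and `Σ₀` to their real forms at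
`φ = 0`. -/

theorem conjTranspose_mul_mul_mul {m n p α : Type*} [Fintype m] [Fintype n] [Semiring α]
    [StarRing α] (A : Matrix m n α) (B : Matrix n p α) (M : Matrix m m α) :
    (A * B)ᴴ * M * (A * B) = Bᴴ * (Aᴴ * M * A) * B := by
  simp only [conjTranspose_mul, Matrix.mul_assoc]

theorem eq_conjTranspose_mul_conj_inv_mul {n α : Type*} [Fintype n] [DecidableEq n] [CommRing α]
    [StarRing α] {R : Matrix n n α} (hR : IsUnit R) (S : Matrix n n α) :
    S = Rᴴ * ((R⁻¹)ᴴ * S * R⁻¹) * R := by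
  rw [← conjTranspose_mul_mul_mul, nonsing_inv_mul _ ((isUnit_iff_isUnit_det R).1 hR)]
  simp

def signatureMatrix : Matrix (Fin 2) (Fin 2) ℂ := !![1, 0; 0, -1]

theorem exists_diagonal_eq_conj_signatureMatrix {d : Fin 2 → ℝ} (hd : d 0 * d 1 < 0) :
    ∃ S : Matrix (Fin 2) (Fin 2) ℂ, IsUnit S ∧
      diagonal (fun i ↦ (d i : ℂ)) = Sᴴ * signatureMatrix * S := by
  rcases lt_or_gt_of_ne (left_ne_zero_of_mul hd.ne) with h0 | h0
  · have h1 : 0 < d 1 := by nlinarith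
    refine ⟨!![0, (√(d 1) : ℂ); (√(-d 0) : ℂ), 0], ?_, ?_⟩
    · simp [isUnit_iff_isUnit_det, det_fin_two, Real.sqrt_ne_zero'.2 h1,
        Real.sqrt_ne_zero'.2 (neg_pos.2 h0)]
    · ext i j
      fin_cases i <;> fin_cases j <;>
        simp [signatureMatrix, mul_apply, Fin.sum_univ_two, ← ofReal_mul,
          Real.mul_self_sqrt h1.le, Real.mul_self_sqrt (neg_nonneg.2 h0.le)]
  · have h1 : d 1 < 0 := by nlinarith
    refine ⟨!![(√(d 0) : ℂ), 0; 0, (√(-d 1) : ℂ)], ?_, ?_⟩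
    · simp [isUnit_iff_isUnit_det, det_fin_two, Real.sqrt_ne_zero'.2 h0,
        Real.sqrt_ne_zero'.2 (neg_pos.2 h1)]
    · ext i j
      fin_cases i <;> fin_cases j <;>
        simp [signatureMatrix, mul_apply, Fin.sum_univ_two, ← ofReal_mul,
          Real.mul_self_sqrt h0.le, Real.mul_self_sqrt (neg_nonneg.2 h1.le)]

theorem Matrix.IsHermitian.exists_eq_conj_signatureMatrix {Δ : Matrix (Fin 2) (Fin 2) ℂ}
    (hΔ : Δ.IsHermitian) (hdet : Δ.det < 0) :
    ∃ R : Matrix (Fin 2) (Fin 2) ℂ, IsUnit R ∧ Δ = Rᴴ * signatureMatrix * R := by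
  have hd : hΔ.eigenvalues 0 * hΔ.eigenvalues 1 < 0 := by
    rw [hΔ.det_eq_prod_eigenvalues, Fin.prod_univ_two, ← RCLike.ofReal_mul] at hdet
    exact RCLike.ofReal_lt_zero.1 hdet
  obtain ⟨S, hS, hdiag⟩ := exists_diagonal_eq_conj_signatureMatrix hd
  refine ⟨S * (hΔ.eigenvectorUnitary : Matrix (Fin 2) (Fin 2) ℂ)ᴴ,
    hS.mul (Unitary.toUnits hΔ.eigenvectorUnitary).isUnit.star, ?_⟩
  rw [conjTranspose_mul_mul_mul, ← hdiag, conjTranspose_conjTranspose]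
  exact hΔ.spectral_theorem

noncomputable def phaseMatrix (u : ℂ) : Matrix (Fin 2) (Fin 2) ℂ := diagonal ![1, u]

theorem phaseMatrix_isUnit {u : ℂ} (hu : ‖u‖ = 1) : IsUnit (phaseMatrix u) := by
  simp [phaseMatrix, isUnit_iff_isUnit_det, ← norm_ne_zero_iff, hu]

theorem conjTranspose_phaseMatrix_mul_mul {u : ℂ} (hu : ‖u‖ = 1) (a b c d : ℂ) :
    (phaseMatrix u)ᴴ * !![a, b; c, d] * phaseMatrix u = !![a, b * u; c * star u, d] := by
  have h : starRingEnd ℂ u * u = 1 := by simp [conj_mul', hu]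
  ext i j
  fin_cases i <;> fin_cases j <;> simp [phaseMatrix]
  · ring
  · linear_combination d * h

theorem conjTranspose_phaseMatrix_mul_signatureMatrix_mul {u : ℂ} (hu : ‖u‖ = 1) :
    (phaseMatrix u)ᴴ * signatureMatrix * phaseMatrix u = signatureMatrix := by
  rw [signatureMatrix, conjTranspose_phaseMatrix_mul_mul hu]
  simp

theorem norm_exp_neg_ofReal_mul_I (x : ℝ) : ‖exp (-(x * I))‖ = 1 := by
  rw [← neg_mul, ← ofReal_neg, norm_exp_ofReal_mul_I]

theorem conjTranspose_phaseMatrix_mul_Delta0_mul (φ : ℝ) :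
    (phaseMatrix (exp (-(φ * I))))ᴴ * Delta0 φ * phaseMatrix (exp (-(φ * I))) =
      !![0, 1; 1, 0] := by
  rw [Delta0, conjTranspose_phaseMatrix_mul_mul (norm_exp_neg_ofReal_mul_I φ)]
  simp [← exp_conj, ← exp_add]

theorem conjTranspose_phaseMatrix_mul_Sigma0_mul (φ α β γ : ℝ) :
    (phaseMatrix (exp (-(φ * I))))ᴴ * Sigma0 φ α β γ * phaseMatrix (exp (-(φ * I))) =
      !![(α : ℂ), β; β, γ] := by
  rw [Sigma0, conjTranspose_phaseMatrix_mul_mul (norm_exp_neg_ofReal_mul_I φ)]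
  simp [← exp_conj, mul_assoc, ← exp_add]

noncomputable def hadamardMatrix : Matrix (Fin 2) (Fin 2) ℂ :=
  !![(√2 : ℂ)⁻¹, (√2 : ℂ)⁻¹; (√2 : ℂ)⁻¹, -(√2 : ℂ)⁻¹]

theorem inv_sqrt_two_mul_self : (√2 : ℂ)⁻¹ * (√2 : ℂ)⁻¹ = 1 / 2 := by
  rw [← mul_inv, ← ofReal_mul, Real.mul_self_sqrt zero_le_two]
  norm_num

theorem hadamardMatrix_isUnit : IsUnit hadamardMatrix := by
  norm_num [hadamardMatrix, isUnit_iff_isUnit_det, det_fin_two, inv_sqrt_two_mul_self]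

theorem conjTranspose_hadamardMatrix_mul_mul (a b c : ℂ) :
    hadamardMatrixᴴ * !![a, b; b, c] * hadamardMatrix =
      !![(a + c) / 2 + b, (a - c) / 2; (a - c) / 2, (a + c) / 2 - b] := by
  have h := inv_sqrt_two_mul_self
  ext i j
  fin_cases i <;> fin_cases j <;> simp [hadamardMatrix, mul_apply, Fin.sum_univ_two] <;> grind

theorem conjTranspose_hadamardMatrix_mul_swap_mul :
    hadamardMatrixᴴ * !![0, 1; 1, 0] * hadamardMatrix = signatureMatrix := by
  rw [conjTranspose_hadamardMatrix_mul_mul]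
  norm_num [signatureMatrix]

theorem conjTranspose_hadamardMatrix_mul_real_mul (p q t : ℝ) :
    hadamardMatrixᴴ * !![(((p + q) / 2 + t : ℝ) : ℂ), ((p - q) / 2 : ℝ); ((p - q) / 2 : ℝ),
      ((p + q) / 2 - t : ℝ)] * hadamardMatrix = !![(p : ℂ), t; t, q] := by
  rw [conjTranspose_hadamardMatrix_mul_mul]
  ext i j
  fin_cases i <;> fin_cases j <;> simp <;> ring

theorem Matrix.IsHermitian.exists_eq_conj_phaseMatrix {S : Matrix (Fin 2) (Fin 2) ℂ}
    (hS : S.IsHermitian) :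
    ∃ u : ℂ, ‖u‖ = 1 ∧ ∃ p q t : ℝ, t ≤ 0 ∧
      S = (phaseMatrix u)ᴴ * !![(p : ℂ), t; t, q] * phaseMatrix u := by
  set w := S 0 1
  have hu : ‖-Complex.exp (arg w * I)‖ = 1 := by rw [norm_neg, norm_exp_ofReal_mul_I]
  refine ⟨_, hu, (S 0 0).re, (S 1 1).re, -‖w‖, by simp, ?_⟩
  rw [conjTranspose_phaseMatrix_mul_mul hu]
  have hw : ((-‖w‖ : ℝ) : ℂ) * -Complex.exp (arg w * I) = w := by
    push_cast
    rw [neg_mul_neg, norm_mul_exp_arg_mul_I]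
  ext i j
  fin_cases i <;> fin_cases j
  · exact (hS.coe_re_apply_self 0).symm
  · exact hw.symm
  · calc S 1 0 = star w := (hS.apply 1 0).symm
      _ = star (((-‖w‖ : ℝ) : ℂ) * -Complex.exp (arg w * I)) := by rw [hw]
      _ = ((-‖w‖ : ℝ) : ℂ) * star (-Complex.exp (arg w * I)) := by
        rw [star_mul', Complex.star_def, conj_ofReal]
  · exact (hS.coe_re_apply_self 1).symm

theorem joint_congruence_normal_form_general (φ : ℝ)
    (Δ Sig : Matrix (Fin 2) (Fin 2) ℂ)
    (hΔ : Δ.IsHermitian) (hSig : Sig.IsHermitian)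
    (hdet : Δ.det < 0) :
    ∃ (T : Matrix (Fin 2) (Fin 2) ℂ) (α β γ : ℝ), IsUnit T ∧ α ≤ γ ∧
      Δ = Tᴴ * Delta0 φ * T ∧ Sig = Tᴴ * Sigma0 φ α β γ * T := by
  obtain ⟨R, hR, rfl⟩ := hΔ.exists_eq_conj_signatureMatrix hdet
  obtain ⟨u, hu, p, q, t, ht, hS⟩ :=
    (isHermitian_conjTranspose_mul_mul R⁻¹ hSig).exists_eq_conj_phaseMatrix
  refine ⟨phaseMatrix (exp (-(φ * I))) * hadamardMatrix * phaseMatrix u * R,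
    (p + q) / 2 + t, (p - q) / 2, (p + q) / 2 - t,
    (((phaseMatrix_isUnit (norm_exp_neg_ofReal_mul_I φ)).mul hadamardMatrix_isUnit).mul
      (phaseMatrix_isUnit hu)).mul hR, by linarith, ?_, ?_⟩
  · simp only [conjTranspose_mul_mul_mul, conjTranspose_phaseMatrix_mul_Delta0_mul,
      conjTranspose_hadamardMatrix_mul_swap_mul,
      conjTranspose_phaseMatrix_mul_signatureMatrix_mul hu]
  · rw [eq_conjTranspose_mul_conj_inv_mul hR Sig, hS]
    simp only [conjTranspose_mul_mul_mul, conjTranspose_phaseMatrix_mul_Sigma0_mul,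
      conjTranspose_hadamardMatrix_mul_real_mul]

/-- Joint congruence normal form (Lemma 5). -/
theorem joint_congruence_normal_form (ν φ : ℝ)
    (hν : 0 < ν) (hν2 : ν < 2) (hφ : φ = (Real.pi / 2) * (ν - 1))
    (Δ Sig : Matrix (Fin 2) (Fin 2) ℂ)
    (hΔ : Δ.IsHermitian) (hSig : Sig.IsHermitian)
    (hdet : Δ.det < 0) :
    ∃ (T : Matrix (Fin 2) (Fin 2) ℂ) (α β γ : ℝ), IsUnit T ∧ α ≤ γ ∧
      Δ = Tᴴ * Delta0 φ * T ∧ Sig = Tᴴ * Sigma0 φ α β γ * T :=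
  joint_congruence_normal_form_general φ Δ Sig hΔ hSig hdet
end

section
/- Outer-product characterization of points on the twisted imaginary axis (Lemma 8, corrected to allow both signs of the real parameter): Let 0 < ν < 2, φ = (π/2)(ν−1), and let f, g ∈ ℂⁿ with g ≠ 0. Then e^{−iφ}·fg* + e^{iφ}·gf* = 0 (as an n×n complex matrix, where fg* denotes the outer product with entries f_j·conj(g_k)) if and only if there exists t ∈ ℝ such that f = t·e^{iπν/2}·g. (The paper states this with t = ω^ν, ω ∈ ℝ⁺; both signs of t must be allowed for the equivalence.) -/
open Matrix Complex
open scoped Matrix Kronecker ComplexOrder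

/-! With `a = e^{-iφ}` the matrix is `F g* + g F*` for `F = a f`, i.e. twice the Hermitian part
of the rank-one matrix `F g*`. Applying it to `g` gives `‖g‖² F + ⟪F, g⟫ g = 0`, so `F = c g`, and then
the matrix is `2 (re c) g g*`, which vanishes iff `c` is purely imaginary, `F = i t g`. Finally
`e^{iπν/2} = i e^{iφ}` turns this into `f = t e^{iπν/2} g`. -/

section

variable {ι : Type*} [Fintype ι]

theorem vecMulVec_smul_add_vecMulVec_star_smul (c : ℂ) (g : ι → ℂ) :
    vecMulVec (c • g) (star g) + vecMulVec g (star (c • g)) =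
      ((2 * c.re : ℝ) : ℂ) • vecMulVec g (star g) := by
  rw [star_smul, smul_vecMulVec, vecMulVec_smul, ← add_smul, Complex.star_def, add_conj]

theorem vecMulVec_add_vecMulVec_star_eq_zero_iff {f g : ι → ℂ} (hg : g ≠ 0) :
    vecMulVec f (star g) + vecMulVec g (star f) = 0 ↔ ∃ t : ℝ, f = ((t : ℂ) * I) • g := by
  have hgg : vecMulVec g (star g) ≠ 0 := vecMulVec_ne_zero hg (by simpa using hg)
  constructor
  · intro h
    obtain ⟨c, rfl⟩ : ∃ c : ℂ, f = c • g := by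
      have hv := congrArg (· *ᵥ g) h
      simp only [add_mulVec, vecMulVec_mulVec, op_smul_eq_smul, zero_mulVec] at hv
      refine ⟨-(star f ⬝ᵥ g) / (star g ⬝ᵥ g), ?_⟩
      rw [div_eq_inv_mul, mul_smul, neg_smul, ← eq_neg_of_add_eq_zero_left hv,
        inv_smul_smul₀ (dotProduct_star_self_eq_zero.not.mpr hg)]
    rw [vecMulVec_smul_add_vecMulVec_star_smul, smul_eq_zero_iff_left hgg] at h
    have hre : c.re = 0 := by simpa using h
    exact ⟨c.im, by rw [← re_add_im c, hre]; simp⟩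
  · rintro ⟨t, rfl⟩
    rw [vecMulVec_smul_add_vecMulVec_star_smul]
    simp

end

theorem outer_product_twisted_imaginary_axis_general {n : ℕ} (ν φ : ℝ)
    (hφ : φ = (Real.pi / 2) * (ν - 1))
    (f g : Fin n → ℂ) (hg : g ≠ 0) :
    Complex.exp (-(φ : ℂ) * Complex.I) • Matrix.vecMulVec f (star g) +
      Complex.exp ((φ : ℂ) * Complex.I) • Matrix.vecMulVec g (star f) = 0 ↔
    ∃ t : ℝ, f = ((t : ℂ) * Complex.exp ((Real.pi * ν / 2 : ℝ) * Complex.I)) • g := by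
  have hconj : star (exp (-(φ : ℂ) * I)) = exp (φ * I) := by
    rw [star_def, ← exp_conj]; simp
  have hrot : exp ((Real.pi * ν / 2 : ℝ) * I) = I * exp (φ * I) := by
    have hsum : ((Real.pi * ν / 2 : ℝ) : ℂ) * I = Real.pi / 2 * I + φ * I := by
      rw [hφ]; push_cast; ring
    rw [hsum, exp_add, exp_pi_div_two_mul_I]
  rw [← hconj, ← smul_vecMulVec (exp _) f, ← vecMulVec_smul, ← star_smul,
    vecMulVec_add_vecMulVec_star_eq_zero_iff hg]
  refine exists_congr fun t => ?_
  rw [neg_mul, exp_neg, inv_smul_eq_iff₀ (exp_ne_zero _), smul_smul, hrot,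
    mul_left_comm, mul_comm I]

/-- Outer-product characterization of points on the twisted imaginary axis
(Lemma 8, corrected to allow both signs of the real parameter). -/
theorem outer_product_twisted_imaginary_axis {n : ℕ} (ν φ : ℝ)
    (hν : 0 < ν) (hν2 : ν < 2) (hφ : φ = (Real.pi / 2) * (ν - 1))
    (f g : Fin n → ℂ) (hg : g ≠ 0) :
    Complex.exp (-(φ : ℂ) * Complex.I) • Matrix.vecMulVec f (star g) +
      Complex.exp ((φ : ℂ) * Complex.I) • Matrix.vecMulVec g (star f) = 0 ↔
    ∃ t : ℝ, f = ((t : ℂ) * Complex.exp ((Real.pi * ν / 2 : ℝ) * Complex.I)) • g :=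
  outer_product_twisted_imaginary_axis_general ν φ hφ f g hg
end

section
/- Kernel/quadratic-form equivalence on the curve Θ(Δ₀,Σ₀) (Lemma 9): Let 0 < ν < 2, φ = (π/2)(ν−1), and let α, β, γ ∈ ℝ satisfy either 0 ≤ α ≤ γ or α < 0 < γ. Let f, g ∈ ℂⁿ and let ζ = (f, g) ∈ ℂ^{2n}. Then the following are equivalent. (i) Either there exists θ ∈ ℂ with ρ(θ,Δ₀) = 0, ρ(θ,Σ₀) ≥ 0 and f = θg; or α ≥ 0 and g = 0 (the θ = ∞ case, which occurs exactly when the curve is unbounded). (ii) For all Hermitian matrices U, V ∈ ℂ^{n×n} with V positive semidefinite, the (real) Hermitian-form value ζ*(Δ₀ ⊗ U + Σ₀ ⊗ V)ζ is ≥ 0. -/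
open Matrix Complex
open scoped Matrix Kronecker ComplexOrder

/-!
Write `e = exp(iφ)`. For Hermitian `U` the form `ζ*(Δ₀ ⊗ U)ζ` equals `2 Re (e f*Ug)`; replacing `U`
by `-U` shows that (ii) with `V = 0` forces it to vanish for every Hermitian `U`, and when `g ≠ 0`
this makes `f` a multiple `θ g`. Then `ζ = [θ,1] ⊗ g` is a pure tensor, and for `ζ = v ⊗ x` the form
is `(v*Δ₀v)(x*Ux) + (v*Σ₀v)(x*Vx)`. Taking `U = ±1, V = 0` and `U = 0, V = 1`, it is nonnegative for
all admissible `U, V` exactly when `x = 0` or `v*Δ₀v = 0 ≤ v*Σ₀v`: for `v = [θ,1]` this is (i), and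
for `g = 0`, i.e. `ζ = [1,0] ⊗ f`, it reads `α ≥ 0`. The remaining case `ζ = 0` is covered by `θ = 0`
when `γ ≥ 0`.
-/

namespace Matrix

section Kronecker

variable {R ι κ : Type*} [CommSemiring R] [StarRing R] [Fintype ι] [Fintype κ]

theorem star_dotProduct_kronecker_mulVec (A : Matrix κ κ R) (U : Matrix ι ι R)
    (x : κ → ι → R) :
    star (fun q : κ × ι => x q.1 q.2) ⬝ᵥ (A ⊗ₖ U) *ᵥ (fun q => x q.1 q.2) =
      ∑ i, ∑ j, A i j * (star (x i) ⬝ᵥ U *ᵥ x j) := by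
  simp only [dotProduct, mulVec, kroneckerMap_apply, Fintype.sum_prod_type, Pi.star_apply,
    Finset.mul_sum]
  refine Finset.sum_congr rfl fun i _ => ?_
  rw [Finset.sum_comm]
  exact Finset.sum_congr rfl fun j _ => Finset.sum_congr rfl fun a _ =>
    Finset.sum_congr rfl fun b _ => by ring

theorem star_dotProduct_kronecker_mulVec_tmul (A : Matrix κ κ R) (U : Matrix ι ι R)
    (v : κ → R) (x : ι → R) :
    star (fun q : κ × ι => v q.1 * x q.2) ⬝ᵥ (A ⊗ₖ U) *ᵥ (fun q => v q.1 * x q.2) =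
      (star v ⬝ᵥ A *ᵥ v) * (star x ⬝ᵥ U *ᵥ x) := by
  refine (star_dotProduct_kronecker_mulVec A U (fun i => v i • x)).trans ?_
  simp only [star_smul, smul_dotProduct, mulVec_smul, dotProduct_smul, smul_eq_mul]
  generalize star x ⬝ᵥ U *ᵥ x = Q
  simp only [dotProduct, mulVec, Pi.star_apply, Finset.sum_mul, Finset.mul_sum]
  exact Finset.sum_congr rfl fun i _ => Finset.sum_congr rfl fun j _ => by ring

end Kronecker

section Complex

variable {ι κ : Type*} [Fintype ι] [Fintype κ]

theorem IsHermitian.star_dotProduct_mulVec {U : Matrix ι ι ℂ} (hU : U.IsHermitian)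
    (x y : ι → ℂ) : star (star x ⬝ᵥ U *ᵥ y) = star y ⬝ᵥ U *ᵥ x := by
  rw [← star_dotProduct_star, star_mulVec, star_star, ← dotProduct_mulVec, hU.eq]

theorem IsHermitian.coe_re_star_dotProduct_mulVec_self {U : Matrix ι ι ℂ} (hU : U.IsHermitian)
    (x : ι → ℂ) : ((star x ⬝ᵥ U *ᵥ x).re : ℂ) = star x ⬝ᵥ U *ᵥ x :=
  Complex.conj_eq_iff_re.mp (hU.star_dotProduct_mulVec x x)

theorem re_dotProduct_star_self_pos {x : ι → ℂ} (hx : x ≠ 0) : 0 < (star x ⬝ᵥ x).re :=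
  (Complex.pos_iff.mp (dotProduct_star_self_pos_iff.mpr hx)).1

theorem re_star_dotProduct_kronecker_add_mulVec_tmul {A B : Matrix κ κ ℂ}
    {U V : Matrix ι ι ℂ} (hA : A.IsHermitian) (hB : B.IsHermitian) (hU : U.IsHermitian)
    (hV : V.IsHermitian) (v : κ → ℂ) (x : ι → ℂ) :
    (star (fun q : κ × ι => v q.1 * x q.2) ⬝ᵥ (A ⊗ₖ U + B ⊗ₖ V) *ᵥ
        (fun q => v q.1 * x q.2)).re =
      (star v ⬝ᵥ A *ᵥ v).re * (star x ⬝ᵥ U *ᵥ x).re +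
        (star v ⬝ᵥ B *ᵥ v).re * (star x ⬝ᵥ V *ᵥ x).re := by
  rw [add_mulVec, dotProduct_add, star_dotProduct_kronecker_mulVec_tmul,
    star_dotProduct_kronecker_mulVec_tmul, ← hA.coe_re_star_dotProduct_mulVec_self,
    ← hB.coe_re_star_dotProduct_mulVec_self, ← hU.coe_re_star_dotProduct_mulVec_self,
    ← hV.coe_re_star_dotProduct_mulVec_self]
  norm_cast

theorem forall_re_kronecker_tmul_nonneg_iff [DecidableEq ι] {A B : Matrix κ κ ℂ}
    (hA : A.IsHermitian) (hB : B.IsHermitian) (v : κ → ℂ) (x : ι → ℂ) :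
    (∀ U V : Matrix ι ι ℂ, U.IsHermitian → V.IsHermitian → V.PosSemidef →
      0 ≤ (star (fun q : κ × ι => v q.1 * x q.2) ⬝ᵥ (A ⊗ₖ U + B ⊗ₖ V) *ᵥ
        (fun q => v q.1 * x q.2)).re) ↔
      x = 0 ∨ ((star v ⬝ᵥ A *ᵥ v).re = 0 ∧ 0 ≤ (star v ⬝ᵥ B *ᵥ v).re) := by
  constructor
  · intro h
    refine or_iff_not_imp_left.mpr fun hx => ?_
    have hpos := re_dotProduct_star_self_pos hx
    have hU := h 1 0 isHermitian_one isHermitian_zero PosSemidef.zero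
    have hU' := h (-1) 0 isHermitian_one.neg isHermitian_zero PosSemidef.zero
    have hV := h 0 1 isHermitian_zero isHermitian_one PosSemidef.one
    simp only [re_star_dotProduct_kronecker_add_mulVec_tmul hA hB isHermitian_one
      isHermitian_zero, re_star_dotProduct_kronecker_add_mulVec_tmul hA hB isHermitian_one.neg
      isHermitian_zero, re_star_dotProduct_kronecker_add_mulVec_tmul hA hB isHermitian_zero
      isHermitian_one, one_mulVec, zero_mulVec, neg_mulVec, dotProduct_zero, dotProduct_neg,
      Complex.neg_re, Complex.zero_re, mul_zero, add_zero, zero_add, mul_neg] at hU hU' hV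
    exact ⟨by nlinarith, nonneg_of_mul_nonneg_left hV hpos⟩
  · rintro (rfl | ⟨hA0, hB0⟩) U V hU hV hVpsd
    · simp [← Pi.zero_def]
    rw [re_star_dotProduct_kronecker_add_mulVec_tmul hA hB hU hV, hA0, zero_mul, zero_add]
    exact mul_nonneg hB0 (Complex.nonneg_iff.mp (hVpsd.dotProduct_mulVec_nonneg x)).1

theorem exists_eq_smul_of_forall_re_star_dotProduct_mulVec_eq_zero {h g : ι → ℂ} (hg : g ≠ 0)
    (H : ∀ U : Matrix ι ι ℂ, U.IsHermitian → (star h ⬝ᵥ U *ᵥ g).re = 0) :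
    ∃ θ : ℂ, h = θ • g := by
  have hgg : star g ⬝ᵥ g ≠ 0 := fun h0 => hg (dotProduct_star_self_eq_zero.mp h0)
  set θ := (star g ⬝ᵥ h) / (star g ⬝ᵥ g)
  set k := h - θ • g
  have hgk : star g ⬝ᵥ k = 0 := by
    simp only [k, dotProduct_sub, dotProduct_smul, smul_eq_mul, θ]
    field_simp
    ring
  have hkg : star k ⬝ᵥ g = 0 := by rw [star_dotProduct, hgk, star_zero]
  have hhk : star h ⬝ᵥ k = star k ⬝ᵥ k := by
    rw [show h = k + θ • g by simp [k], star_add, add_dotProduct, star_smul, smul_dotProduct, hgk,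
      smul_zero, add_zero]
  -- `k` is the part of `h` orthogonal to `g`; testing `H` on `k g* + g k*` gives `‖k‖²‖g‖² = 0`.
  have hkk : star k ⬝ᵥ k = 0 := by
    have hU : (vecMulVec k (star g) + vecMulVec g (star k)).IsHermitian := by
      rw [IsHermitian, conjTranspose_add, conjTranspose_vecMulVec, conjTranspose_vecMulVec,
        star_star, star_star, add_comm]
    have hform : star h ⬝ᵥ (vecMulVec k (star g) + vecMulVec g (star k)) *ᵥ g =
        (star k ⬝ᵥ k) * (star g ⬝ᵥ g) := by
      simp only [add_mulVec, vecMulVec_mulVec, op_smul_eq_smul, dotProduct_add, dotProduct_smul,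
        smul_eq_mul, hkg, hhk]
      ring
    have hnonneg := Complex.nonneg_iff.mp
      (mul_nonneg (dotProduct_star_self_nonneg k) (dotProduct_star_self_nonneg g))
    have hzero : (star k ⬝ᵥ k) * (star g ⬝ᵥ g) = 0 :=
      Complex.ext (by rw [← hform, H _ hU, Complex.zero_re]) hnonneg.2.symm
    exact (mul_eq_zero.mp hzero).resolve_right hgg
  exact ⟨θ, sub_eq_zero.mp (dotProduct_star_self_eq_zero.mp hkk)⟩

end Complex

end Matrix

section Curve

variable {ι : Type*}

theorem starRingEnd_exp_ofReal_mul_I (φ : ℝ) :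
    starRingEnd ℂ (Complex.exp ((φ : ℂ) * Complex.I)) = Complex.exp (-(φ : ℂ) * Complex.I) := by
  rw [← Complex.exp_conj, map_mul, Complex.conj_ofReal, Complex.conj_I, mul_neg, neg_mul]

theorem isHermitian_Delta0 (φ : ℝ) : (Delta0 φ).IsHermitian := by
  ext i j
  fin_cases i <;> fin_cases j <;> simp [Delta0, ← Complex.exp_conj]

theorem isHermitian_Sigma0 (φ α β γ : ℝ) : (Sigma0 φ α β γ).IsHermitian := by
  ext i j
  fin_cases i <;> fin_cases j <;> simp [Sigma0, ← Complex.exp_conj]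

theorem stack_smul_eq_tmul (θ : ℂ) (g : ι → ℂ) :
    (fun q : Fin 2 × ι => ![θ • g, g] q.1 q.2) = fun q => ![θ, 1] q.1 * g q.2 := by
  funext ⟨i, j⟩
  fin_cases i <;> simp

theorem stack_zero_eq_tmul (f : ι → ℂ) :
    (fun q : Fin 2 × ι => ![f, 0] q.1 q.2) = fun q => ![1, 0] q.1 * f q.2 := by
  funext ⟨i, j⟩
  fin_cases i <;> simp

variable [Fintype ι]

theorem re_star_dotProduct_Delta0_kronecker_mulVec (φ : ℝ) {U : Matrix ι ι ℂ}
    (hU : U.IsHermitian) (f g : ι → ℂ) :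
    (star (fun q : Fin 2 × ι => ![f, g] q.1 q.2) ⬝ᵥ (Delta0 φ ⊗ₖ U) *ᵥ
        (fun q => ![f, g] q.1 q.2)).re =
      2 * (star (starRingEnd ℂ (Complex.exp ((φ : ℂ) * Complex.I)) • f) ⬝ᵥ U *ᵥ g).re := by
  rw [star_dotProduct_kronecker_mulVec]
  simp only [Fin.sum_univ_two, Delta0, of_apply, cons_val', cons_val_zero, cons_val_one,
    empty_val', cons_val_fin_one, zero_mul, zero_add, add_zero]
  rw [← starRingEnd_exp_ofReal_mul_I, ← hU.star_dotProduct_mulVec f g, star_smul, smul_dotProduct]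
  generalize Complex.exp ((φ : ℂ) * Complex.I) = e
  generalize star f ⬝ᵥ U *ᵥ g = w
  simp [Complex.mul_re]
  ring

theorem exists_eq_smul_of_forall_re_Delta0_kronecker_nonneg (φ : ℝ) {f g : ι → ℂ}
    (hg : g ≠ 0)
    (h : ∀ U : Matrix ι ι ℂ, U.IsHermitian →
      0 ≤ (star (fun q : Fin 2 × ι => ![f, g] q.1 q.2) ⬝ᵥ (Delta0 φ ⊗ₖ U) *ᵥ
        (fun q => ![f, g] q.1 q.2)).re) :
    ∃ θ : ℂ, f = θ • g := by
  set e := Complex.exp ((φ : ℂ) * Complex.I)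
  have hform : ∀ U : Matrix ι ι ℂ, U.IsHermitian →
      (star (starRingEnd ℂ e • f) ⬝ᵥ U *ᵥ g).re = 0 := by
    intro U hU
    have hpos := h U hU
    have hneg := h (-U) hU.neg
    rw [re_star_dotProduct_Delta0_kronecker_mulVec φ hU] at hpos
    rw [re_star_dotProduct_Delta0_kronecker_mulVec φ hU.neg, neg_mulVec, dotProduct_neg,
      Complex.neg_re] at hneg
    linarith
  obtain ⟨θ, hθ⟩ := exists_eq_smul_of_forall_re_star_dotProduct_mulVec_eq_zero hg hform
  have he : e * starRingEnd ℂ e = 1 := by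
    rw [Complex.mul_conj, Complex.normSq_eq_norm_sq, Complex.norm_exp_ofReal_mul_I]
    norm_num
  exact ⟨e * θ, by rw [← smul_smul, ← hθ, smul_smul, he, one_smul]⟩

end Curve

theorem kernel_quadratic_form_curve_general {n : ℕ} (φ : ℝ)
    (α β γ : ℝ) (hαβγ : (0 ≤ α ∧ α ≤ γ) ∨ (α < 0 ∧ 0 < γ))
    (f g : Fin n → ℂ) (ζ : Fin 2 × Fin n → ℂ)
    (hζ : ζ = fun q => ![f, g] q.1 q.2) :
    ((∃ θ : ℂ, rho θ (Delta0 φ) = 0 ∧ 0 ≤ rho θ (Sigma0 φ α β γ) ∧ f = θ • g) ∨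
      (0 ≤ α ∧ g = 0)) ↔
    (∀ U V : Matrix (Fin n) (Fin n) ℂ, U.IsHermitian → V.IsHermitian → V.PosSemidef →
      0 ≤ (star ζ ⬝ᵥ (Delta0 φ ⊗ₖ U + Sigma0 φ α β γ ⊗ₖ V) *ᵥ ζ).re) := by
  subst hζ
  have hkron := forall_re_kronecker_tmul_nonneg_iff (ι := Fin n) (isHermitian_Delta0 φ)
    (isHermitian_Sigma0 φ α β γ)
  constructor
  · rintro (⟨θ, hDelta, hSigma, rfl⟩ | ⟨hα, rfl⟩)
    · rw [stack_smul_eq_tmul]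
      exact (hkron _ _).mpr (Or.inr ⟨hDelta, hSigma⟩)
    · rw [stack_zero_eq_tmul]
      exact (hkron _ _).mpr (Or.inr ⟨by simp [Delta0], by simpa [Sigma0]⟩)
  · intro h
    by_cases hg : g = 0
    · subst hg
      rw [stack_zero_eq_tmul, hkron] at h
      rcases h with rfl | ⟨-, hα⟩
      · rcases hαβγ with ⟨hα, -⟩ | ⟨-, hγ⟩
        · exact Or.inr ⟨hα, rfl⟩
        · exact Or.inl ⟨0, by simp [rho, Delta0], by simpa [rho, Sigma0] using hγ.le, by simp⟩
      · exact Or.inr ⟨by simpa [Sigma0] using hα, rfl⟩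
    · obtain ⟨θ, rfl⟩ := exists_eq_smul_of_forall_re_Delta0_kronecker_nonneg φ hg fun U hU => by
        simpa using h U 0 hU isHermitian_zero PosSemidef.zero
      rw [stack_smul_eq_tmul, hkron] at h
      obtain ⟨hDelta, hSigma⟩ := h.resolve_left hg
      exact Or.inl ⟨θ, hDelta, hSigma, rfl⟩

/-- Kernel/quadratic-form equivalence on the curve Θ(Δ₀,Σ₀) (Lemma 9). -/
theorem kernel_quadratic_form_curve {n : ℕ} (ν φ : ℝ)
    (hν : 0 < ν) (hν2 : ν < 2) (hφ : φ = (Real.pi / 2) * (ν - 1))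
    (α β γ : ℝ) (hαβγ : (0 ≤ α ∧ α ≤ γ) ∨ (α < 0 ∧ 0 < γ))
    (f g : Fin n → ℂ) (ζ : Fin 2 × Fin n → ℂ)
    (hζ : ζ = fun q => ![f, g] q.1 q.2) :
    ((∃ θ : ℂ, rho θ (Delta0 φ) = 0 ∧ 0 ≤ rho θ (Sigma0 φ α β γ) ∧ f = θ • g) ∨
      (0 ≤ α ∧ g = 0)) ↔
    (∀ U V : Matrix (Fin n) (Fin n) ℂ, U.IsHermitian → V.IsHermitian → V.PosSemidef →
      0 ≤ (star ζ ⬝ᵥ (Delta0 φ ⊗ₖ U + Sigma0 φ α β γ ⊗ₖ V) *ᵥ ζ).re) :=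
  kernel_quadratic_form_curve_general φ α β γ hαβγ f g ζ hζ
end

section
/- Positive-semidefinite outer-product sum characterizes the lower half-plane (Lemma 13): Let f, g ∈ ℂⁿ with g ≠ 0, and let fg* denote the n×n outer-product matrix with entries f_j·conj(g_k). Then fg* + gf* is positive semidefinite if and only if there exists θ ∈ ℂ with Im θ ≤ 0 such that f = iθ·g. -/
/-!
Put `M = f g* + g f*`, so that `M x = (g* x) f + (f* x) g`. If `g* x = 0` then `x* M x = 0`, and
positivity forces `M x = (f* x) g = 0`, i.e. `f* x = 0`: every vector orthogonal to `g` is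
orthogonal to `f`, hence `f = c g`. Then `M = 2 Re c · g g*`, which is positive semidefinite
exactly when `Re c ≥ 0`, i.e. when `θ = -i c` satisfies `Im θ ≤ 0`.
-/

open Matrix Complex
open scoped Matrix Kronecker ComplexOrder

namespace Matrix

section CommSemiring

variable {R ι : Type*} [CommSemiring R] [StarRing R]

theorem vecMulVec_smul_add_vecMulVec_star_smul (c : R) (g : ι → R) :
    vecMulVec (c • g) (star g) + vecMulVec g (star (c • g)) =
      (c + star c) • vecMulVec g (star g) := by
  rw [star_smul, smul_vecMulVec, vecMulVec_smul, add_smul]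

theorem vecMulVec_add_vecMulVec_star_mulVec [Fintype ι] (f g x : ι → R) :
    (vecMulVec f (star g) + vecMulVec g (star f)) *ᵥ x =
      (star g ⬝ᵥ x) • f + (star f ⬝ᵥ x) • g := by
  simp only [add_mulVec, vecMulVec_mulVec, op_smul_eq_smul]

end CommSemiring

variable {𝕜 ι : Type*} [RCLike 𝕜] [Fintype ι]

theorem exists_eq_smul_of_forall_dotProduct_eq_zero {f g : ι → 𝕜}
    (h : ∀ x, star g ⬝ᵥ x = 0 → star f ⬝ᵥ x = 0) : ∃ c : 𝕜, f = c • g := by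
  set μ := (star g ⬝ᵥ f) / (star g ⬝ᵥ g)
  have hgx : star g ⬝ᵥ (f - μ • g) = 0 := by
    by_cases hg : g = 0
    · simp [hg]
    · rw [dotProduct_sub, dotProduct_smul, smul_eq_mul,
        div_mul_cancel₀ _ (dotProduct_star_self_eq_zero.not.mpr hg), sub_self]
  have hxx : star (f - μ • g) ⬝ᵥ (f - μ • g) = 0 := by
    rw [star_sub, star_smul, sub_dotProduct, smul_dotProduct, hgx, h _ hgx, smul_zero, sub_zero]
  exact ⟨μ, sub_eq_zero.mp (dotProduct_star_self_eq_zero.mp hxx)⟩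

theorem PosSemidef.dotProduct_eq_zero_of_vecMulVec_add_vecMulVec_star {f g x : ι → 𝕜}
    (hM : (vecMulVec f (star g) + vecMulVec g (star f)).PosSemidef) (hg : g ≠ 0)
    (hx : star g ⬝ᵥ x = 0) : star f ⬝ᵥ x = 0 := by
  have hMx : (vecMulVec f (star g) + vecMulVec g (star f)) *ᵥ x = (star f ⬝ᵥ x) • g := by
    rw [vecMulVec_add_vecMulVec_star_mulVec, hx, zero_smul, zero_add]
  have hxMx : star x ⬝ᵥ (vecMulVec f (star g) + vecMulVec g (star f)) *ᵥ x = 0 := by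
    rw [hMx, dotProduct_smul, star_dotProduct x g, hx, star_zero, smul_zero]
  rw [hM.dotProduct_mulVec_zero_iff, hMx, smul_eq_zero] at hxMx
  exact hxMx.resolve_right hg

theorem posSemidef_smul_vecMulVec_self_star_iff {r : 𝕜} {g : ι → 𝕜} (hg : g ≠ 0) :
    (r • vecMulVec g (star g)).PosSemidef ↔ 0 ≤ r := by
  refine ⟨fun h => ?_, fun hr => (posSemidef_vecMulVec_self_star g).smul hr⟩
  have hp : 0 < star g ⬝ᵥ g := dotProduct_star_self_pos_iff.mpr hg
  have hq : 0 ≤ r * ((star g ⬝ᵥ g) * (star g ⬝ᵥ g)) := by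
    simpa only [smul_mulVec, vecMulVec_mulVec, op_smul_eq_smul, dotProduct_smul, smul_eq_mul,
      mul_assoc] using h.dotProduct_mulVec_nonneg g
  simpa [mul_assoc, hp.ne'] using mul_nonneg hq (RCLike.inv_pos_of_pos (mul_pos hp hp)).le

theorem posSemidef_vecMulVec_smul_add_vecMulVec_star_smul_iff {c : 𝕜} {g : ι → 𝕜} (hg : g ≠ 0) :
    (vecMulVec (c • g) (star g) + vecMulVec g (star (c • g))).PosSemidef ↔ 0 ≤ RCLike.re c := by
  rw [vecMulVec_smul_add_vecMulVec_star_smul, posSemidef_smul_vecMulVec_self_star_iff hg,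
    RCLike.star_def, RCLike.add_conj, ← RCLike.ofReal_ofNat, ← RCLike.ofReal_mul,
    RCLike.ofReal_nonneg]
  exact mul_nonneg_iff_of_pos_left two_pos

end Matrix

/-- Positive-semidefinite outer-product sum characterizes the lower half-plane (Lemma 13). -/
theorem outer_product_sum_psd_iff_lower_half_plane {n : ℕ}
    (f g : Fin n → ℂ) (hg : g ≠ 0) :
    (Matrix.vecMulVec f (star g) + Matrix.vecMulVec g (star f)).PosSemidef ↔
    ∃ θ : ℂ, θ.im ≤ 0 ∧ f = (Complex.I * θ) • g := by
  constructor
  · intro hM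
    obtain ⟨c, rfl⟩ := exists_eq_smul_of_forall_dotProduct_eq_zero fun _ =>
      hM.dotProduct_eq_zero_of_vecMulVec_add_vecMulVec_star hg
    have hc : 0 ≤ c.re := (posSemidef_vecMulVec_smul_add_vecMulVec_star_smul_iff hg).mp hM
    refine ⟨-I * c, by simpa using hc, ?_⟩
    rw [← mul_assoc, mul_neg, I_mul_I, neg_neg, one_mul]
  · rintro ⟨θ, hθ, rfl⟩
    exact (posSemidef_vecMulVec_smul_add_vecMulVec_star_smul_iff hg).mpr (by simpa using hθ)
end
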